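/- For the degree-3 genus-1 BPS number of the quintic threefold X_5 ⊂ P⁴: the formula of Corollary 'bcov_crl' with a = (5), n = 5 yields a power series whose BPS transform has degree-3 coefficient 609250. More precisely, with I_0(q) = Σ_d q^d (5d)!/(d!)^5, J(q) = I_0(q)^{−1} Σ_{d≥1} q^d ((5d)!/(d!)^5)(Σ_{r=d+1}^{5d} 5/r), Q = q e^{J(q)}, and I_1 = 1 + D J where D = q d/dq, the series G(Q) := [−2 + (5/72)(5 − 125)]·log I_0 + (5/48)(25 − 5)·J + log(I_1^{−1/2}(1 − 5⁵q)^{−1/12}), expanded in Q, has genus-1 BPS degree-3 coefficient (after the standard genus-0/genus-1 BPS correction of Gopakumar–Vafa in degree 3) equal to 609250. -/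

import Mathlib

open PowerSeries

noncomputable section

/-- `I_0(q) = Σ_d q^d (5d)!/(d!)^5` for the quintic threefold. -/
def I0q : PowerSeries ℚ :=
  PowerSeries.mk fun d => ((5 * d).factorial : ℚ) / ((d.factorial : ℚ)) ^ 5

/-- `J(q) = I_0(q)^{−1} Σ_{d≥1} q^d ((5d)!/(d!)^5)(Σ_{r=d+1}^{5d} 5/r)`. -/
def Jq : PowerSeries ℚ :=
  I0q⁻¹ *
    PowerSeries.mk fun d =>
      if d = 0 then 0
      else ((5 * d).factorial : ℚ) / ((d.factorial : ℚ)) ^ 5 *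
        ∑ r ∈ Finset.Icc (d + 1) (5 * d), 5 / (r : ℚ)

/-- `D = q d/dq`. -/
def Dq (F : PowerSeries ℚ) : PowerSeries ℚ :=
  PowerSeries.mk fun d => (d : ℚ) * PowerSeries.coeff d F

/-- `I_1 = 1 + D J`. -/
def I1q : PowerSeries ℚ := 1 + Dq Jq

/-- formal exponential of a power series with zero constant term. -/
def expPS (G : PowerSeries ℚ) : PowerSeries ℚ :=
  PowerSeries.mk fun d =>
    ∑ j ∈ Finset.range (d + 1), PowerSeries.coeff d (G ^ j) / (j.factorial : ℚ)

/-- the mirror map `Q = q e^{J(q)}`, as a power series in `q`. -/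
def Qser : PowerSeries ℚ := PowerSeries.X * expPS Jq

/-- formal logarithm of a power series with constant term `1`. -/
def logPS (F : PowerSeries ℚ) : PowerSeries ℚ :=
  PowerSeries.mk fun d =>
    if d = 0 then 0
    else ∑ m ∈ Finset.Icc 1 d,
      ((-1 : ℚ) ^ (m + 1) / (m : ℚ)) * PowerSeries.coeff d ((F - 1) ^ m)

/-- the genus-1 mirror-symmetry series of the quintic threefold (Corollary `bcov_crl` with
`n = 5`, `a = (5)`):
`G = [−2 + (5/72)(5 − 125)]·log I₀ + (5/48)(25 − 5)·J + log(I₁^{−1/2}(1 − 5⁵q)^{−1/12})`. -/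
def Gq : PowerSeries ℚ :=
  PowerSeries.C (-2 + (5 / 72) * (5 - 125)) * logPS I0q +
    PowerSeries.C ((5 / 48) * (25 - 5)) * Jq +
    PowerSeries.C (-(1 / 2)) * logPS I1q +
    PowerSeries.C (-(1 / 12)) * logPS (1 - PowerSeries.C ((5 : ℚ) ^ 5) * PowerSeries.X)

end

/-! Only the coefficients of `q`, `q²`, `q³` matter, so every series is computed modulo `q⁴`
(its cubic jet). Comparing the jets of `G` and of the powers of the mirror map `Q = q + 770 q² + …`
inverts the mirror map to third order and gives `N₁¹` and `N₁³`. In degree 3 the Gopakumar–Vafa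
relations give `n₁³ = N₁³ − n₀³/12 − N₁¹/3`, because `n₁¹` enters `N₁³` only through `N₁¹`. -/

structure HasCubicJet {R : Type*} [Semiring R] (A : R⟦X⟧) (a₀ a₁ a₂ a₃ : R) : Prop where
  coeff_zero : coeff 0 A = a₀
  coeff_one : coeff 1 A = a₁
  coeff_two : coeff 2 A = a₂
  coeff_three : coeff 3 A = a₃

section Semiring

variable {R : Type*} [Semiring R] {A B : R⟦X⟧} {a₀ a₁ a₂ a₃ b₀ b₁ b₂ b₃ : R}

theorem hasCubicJet_one : HasCubicJet (1 : R⟦X⟧) 1 0 0 0 :=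
  ⟨by simp, by simp, by simp, by simp⟩

theorem hasCubicJet_X : HasCubicJet (X : R⟦X⟧) 0 1 0 0 :=
  ⟨by simp, by simp, by simp [coeff_X], by simp [coeff_X]⟩

namespace HasCubicJet

theorem congr (h : HasCubicJet A a₀ a₁ a₂ a₃) (h₀ : a₀ = b₀) (h₁ : a₁ = b₁) (h₂ : a₂ = b₂)
    (h₃ : a₃ = b₃) : HasCubicJet A b₀ b₁ b₂ b₃ := by
  subst h₀ h₁ h₂ h₃; exact h

theorem add (hA : HasCubicJet A a₀ a₁ a₂ a₃) (hB : HasCubicJet B b₀ b₁ b₂ b₃) :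
    HasCubicJet (A + B) (a₀ + b₀) (a₁ + b₁) (a₂ + b₂) (a₃ + b₃) := by
  obtain ⟨_, _, _, _⟩ := hA; obtain ⟨_, _, _, _⟩ := hB
  constructor <;> simp only [map_add, *]

theorem C_mul (c : R) (hA : HasCubicJet A a₀ a₁ a₂ a₃) :
    HasCubicJet (C c * A) (c * a₀) (c * a₁) (c * a₂) (c * a₃) := by
  obtain ⟨_, _, _, _⟩ := hA
  constructor <;> simp [*]

theorem mul (hA : HasCubicJet A a₀ a₁ a₂ a₃) (hB : HasCubicJet B b₀ b₁ b₂ b₃) :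
    HasCubicJet (A * B) (a₀ * b₀) (a₀ * b₁ + a₁ * b₀) (a₀ * b₂ + a₁ * b₁ + a₂ * b₀)
      (a₀ * b₃ + a₁ * b₂ + a₂ * b₁ + a₃ * b₀) := by
  obtain ⟨_, _, _, _⟩ := hA; obtain ⟨_, _, _, _⟩ := hB
  constructor <;> simp [coeff_mul, Finset.Nat.antidiagonal_succ, *] <;> abel

end HasCubicJet

end Semiring

theorem HasCubicJet.sub {R : Type*} [Ring R] {A B : R⟦X⟧} {a₀ a₁ a₂ a₃ b₀ b₁ b₂ b₃ : R}
    (hA : HasCubicJet A a₀ a₁ a₂ a₃) (hB : HasCubicJet B b₀ b₁ b₂ b₃) :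
    HasCubicJet (A - B) (a₀ - b₀) (a₁ - b₁) (a₂ - b₂) (a₃ - b₃) := by
  obtain ⟨_, _, _, _⟩ := hA; obtain ⟨_, _, _, _⟩ := hB
  constructor <;> simp only [map_sub, *]

theorem hasCubicJet_one_sub_C_mul_X {R : Type*} [Ring R] (c : R) :
    HasCubicJet (1 - C c * X) 1 (-c) 0 0 :=
  (hasCubicJet_one.sub (hasCubicJet_X.C_mul c)).congr (by simp) (by simp) (by simp) (by simp)

section CommSemiring

variable {R : Type*} [CommSemiring R] {A : R⟦X⟧} {a₁ a₂ a₃ : R}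

theorem HasCubicJet.sq (hA : HasCubicJet A 0 a₁ a₂ a₃) :
    HasCubicJet (A ^ 2) 0 0 (a₁ ^ 2) (2 * a₁ * a₂) :=
  (pow_two A ▸ hA.mul hA).congr (by ring) (by ring) (by ring) (by ring)

theorem HasCubicJet.cube (hA : HasCubicJet A 0 a₁ a₂ a₃) : HasCubicJet (A ^ 3) 0 0 0 (a₁ ^ 3) :=
  (pow_succ A 2 ▸ hA.sq.mul hA).congr (by ring) (by ring) (by ring) (by ring)

end CommSemiring

theorem HasCubicJet.inv {K : Type*} [Field K] {A : K⟦X⟧} {a₁ a₂ a₃ : K}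
    (hA : HasCubicJet A 1 a₁ a₂ a₃) :
    HasCubicJet A⁻¹ 1 (-a₁) (a₁ ^ 2 - a₂) (-a₁ ^ 3 + 2 * a₁ * a₂ - a₃) := by
  have hc : constantCoeff A = 1 := by simpa using hA.coeff_zero
  obtain ⟨-, h₁, h₂, h₃⟩ := hA.mul (B := A⁻¹) ⟨rfl, rfl, rfl, rfl⟩
  rw [PowerSeries.mul_inv_cancel A (by simp [hc])] at h₁ h₂ h₃
  simp only [PowerSeries.coeff_one, one_ne_zero, OfNat.ofNat_ne_zero, ↓reduceIte, one_mul,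
    coeff_zero_eq_constantCoeff, constantCoeff_inv, hc, inv_one, mul_one] at h₁ h₂ h₃
  have hb₁ : coeff 1 A⁻¹ = -a₁ := by linear_combination -h₁
  have hb₂ : coeff 2 A⁻¹ = a₁ ^ 2 - a₂ := by linear_combination -h₂ + a₁ * h₁
  refine ⟨by simp [hc], hb₁, hb₂, ?_⟩
  linear_combination -h₃ - a₁ * hb₂ - a₂ * hb₁

theorem HasCubicJet.logPS {F : ℚ⟦X⟧} {a₁ a₂ a₃ : ℚ} (hF : HasCubicJet F 1 a₁ a₂ a₃) :
    HasCubicJet (logPS F) 0 a₁ (a₂ - a₁ ^ 2 / 2) (a₃ - a₁ * a₂ + a₁ ^ 3 / 3) := by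
  have h : HasCubicJet (F - 1) 0 a₁ a₂ a₃ :=
    (hF.sub hasCubicJet_one).congr (sub_self 1) (sub_zero _) (sub_zero _) (sub_zero _)
  obtain ⟨-, -, hsq₂, hsq₃⟩ := h.sq
  obtain ⟨-, -, -, hcube₃⟩ := h.cube
  obtain ⟨-, h₁, h₂, h₃⟩ := h
  constructor <;> simp [_root_.logPS, Finset.sum_Icc_succ_top, *] <;> ring

theorem HasCubicJet.expPS {G : ℚ⟦X⟧} {g₁ g₂ g₃ : ℚ} (hG : HasCubicJet G 0 g₁ g₂ g₃) :
    HasCubicJet (expPS G) 1 g₁ (g₂ + g₁ ^ 2 / 2) (g₃ + g₁ * g₂ + g₁ ^ 3 / 6) := by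
  obtain ⟨-, -, hsq₂, hsq₃⟩ := hG.sq
  obtain ⟨-, -, -, hcube₃⟩ := hG.cube
  obtain ⟨_, h₁, h₂, h₃⟩ := hG
  constructor <;> simp [_root_.expPS, Finset.sum_range_succ, Nat.factorial, *]
  ring

theorem HasCubicJet.Dq {A : ℚ⟦X⟧} {a₀ a₁ a₂ a₃ : ℚ} (hA : HasCubicJet A a₀ a₁ a₂ a₃) :
    HasCubicJet (Dq A) 0 a₁ (2 * a₂) (3 * a₃) := by
  obtain ⟨-, h₁, h₂, h₃⟩ := hA
  constructor <;> simp [_root_.Dq, *]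

theorem HasCubicJet.expansion_coeffs {R : Type*} [CommRing R] {G Q : R⟦X⟧} {N : ℕ → R}
    {g₁ g₂ g₃ q₂ q₃ : R} (hG : HasCubicJet G 0 g₁ g₂ g₃) (hQ : HasCubicJet Q 0 1 q₂ q₃)
    (hN : ∀ m : ℕ, coeff m G = ∑ d ∈ Finset.range (m + 1), N d * coeff m (Q ^ d)) :
    N 1 = g₁ ∧ N 3 = g₃ - q₃ * g₁ - 2 * q₂ * (g₂ - q₂ * g₁) := by
  obtain ⟨-, -, hQsq₂, hQsq₃⟩ := hQ.sq
  obtain ⟨-, -, -, hQcube₃⟩ := hQ.cube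
  obtain ⟨-, hQ₁, hQ₂, hQ₃⟩ := hQ
  have h₁ := hN 1
  have h₂ := hN 2
  have h₃ := hN 3
  simp only [Finset.sum_range_succ, Finset.range_one, Finset.sum_singleton, pow_zero, pow_one,
    one_pow, PowerSeries.coeff_one, one_ne_zero, OfNat.ofNat_ne_zero, ↓reduceIte, mul_zero,
    mul_one, zero_add, hG.coeff_one, hG.coeff_two, hG.coeff_three, hQ₁, hQ₂, hQ₃, hQsq₂, hQsq₃,
    hQcube₃] at h₁ h₂ h₃
  subst h₁ h₂ h₃
  exact ⟨rfl, by ring⟩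

theorem gopakumarVafa_genusOne_three {K : Type*} [Field K] {N n₀ n₁ : ℕ → K}
    (hGV : ∀ d : ℕ, 1 ≤ d → N d = ∑ k ∈ d.divisors, (n₀ (d / k) / 12 + n₁ (d / k)) / (k : K)) :
    n₁ 3 = N 3 - n₀ 3 / 12 - N 1 / 3 := by
  have h₁ := hGV 1 le_rfl
  have h₃ := hGV 3 (by norm_num)
  rw [Nat.divisors_one, Finset.sum_singleton] at h₁
  rw [Nat.Prime.divisors Nat.prime_three, Finset.sum_pair (by norm_num)] at h₃
  simp only [Nat.div_self, Nat.div_one, Nat.ofNat_pos, Nat.cast_one, Nat.cast_ofNat,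
    div_one] at h₁ h₃
  linear_combination -h₃ + h₁ / 3

theorem hasCubicJet_I0q : HasCubicJet I0q 1 120 113400 168168000 := by
  constructor <;> norm_num [I0q, Nat.factorial]

def JqNumerator : ℚ⟦X⟧ :=
  PowerSeries.mk fun d =>
    if d = 0 then 0
    else ((5 * d).factorial : ℚ) / ((d.factorial : ℚ)) ^ 5 *
      ∑ r ∈ Finset.Icc (d + 1) (5 * d), 5 / (r : ℚ)

theorem Jq_eq_inv_mul : Jq = I0q⁻¹ * JqNumerator := rfl

theorem hasCubicJet_JqNumerator : HasCubicJet JqNumerator 0 770 810225 (3745679000 / 3) := by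
  constructor <;> norm_num [JqNumerator, Nat.factorial, Finset.sum_Icc_succ_top]

theorem hasCubicJet_Jq : HasCubicJet Jq 0 770 717825 (3225308000 / 3) :=
  Jq_eq_inv_mul ▸ (hasCubicJet_I0q.inv.mul hasCubicJet_JqNumerator).congr
    (by norm_num) (by norm_num) (by norm_num) (by norm_num)

theorem hasCubicJet_I1q : HasCubicJet I1q 1 770 1435650 3225308000 :=
  (hasCubicJet_one.add hasCubicJet_Jq.Dq).congr
    (by norm_num) (by norm_num) (by norm_num) (by norm_num)

theorem hasCubicJet_Gq : HasCubicJet Gq 0 (2875 / 12) (5648875 / 24) (12543053125 / 36) :=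
  ((((hasCubicJet_I0q.logPS.C_mul _).add (hasCubicJet_Jq.C_mul _)).add
    (hasCubicJet_I1q.logPS.C_mul _)).add
    ((hasCubicJet_one_sub_C_mul_X _).logPS.C_mul _)).congr
    (by norm_num) (by norm_num) (by norm_num) (by norm_num)

theorem hasCubicJet_Qser : HasCubicJet Qser 0 1 770 1014275 :=
  (hasCubicJet_X.mul hasCubicJet_Jq.expPS).congr
    (by norm_num) (by norm_num) (by norm_num) (by norm_num)

theorem quintic_genus1_BPS_degree3_general (N1 n0 n1 : ℕ → ℚ)
    (hN : ∀ m : ℕ, PowerSeries.coeff m Gq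
        = ∑ d ∈ Finset.range (m + 1), N1 d * PowerSeries.coeff m (Qser ^ d))
    (hGV : ∀ d : ℕ, 1 ≤ d →
        N1 d = ∑ k ∈ d.divisors, (n0 (d / k) / 12 + n1 (d / k)) / (k : ℚ))
    (hn03 : n0 3 = 317206375) :
    n1 3 = 609250 := by
  obtain ⟨hN₁, hN₃⟩ := hasCubicJet_Gq.expansion_coeffs hasCubicJet_Qser hN
  rw [gopakumarVafa_genusOne_three hGV, hN₁, hN₃, hn03]
  norm_num

/-- If `N₁ d` are the coefficients of `G` expanded in the mirror
variable `Q = q e^{J(q)}`, and `n₁ d` are the genus-1 BPS numbers obtained from the `N₁ d`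
and the genus-0 BPS numbers `n₀ d` of the quintic via the Gopakumar–Vafa formula
`N₁^d = Σ_{k|d} (n₀^{d/k}/12 + n₁^{d/k})/k`, with the standard genus-0 BPS inputs
`n₀¹ = 2875` and `n₀³ = 317206375`, then `n₁³ = 609250`. -/
theorem quintic_genus1_BPS_degree3 (N1 n0 n1 : ℕ → ℚ)
    (hN : ∀ m : ℕ, PowerSeries.coeff m Gq
        = ∑ d ∈ Finset.range (m + 1), N1 d * PowerSeries.coeff m (Qser ^ d))
    (hGV : ∀ d : ℕ, 1 ≤ d →
        N1 d = ∑ k ∈ d.divisors, (n0 (d / k) / 12 + n1 (d / k)) / (k : ℚ))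
    (hn01 : n0 1 = 2875) (hn03 : n0 3 = 317206375) :
    n1 3 = 609250 :=
  quintic_genus1_BPS_degree3_general N1 n0 n1 hN hGV hn03
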